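/- arXiv:0801.2114 — 3 statements merged into one kernel-verified Lean document; each statement's English description precedes it below -/
import Mathlib

section
/- Let k be a field of characteristic ≠ 2, and let q be an anisotropic quadratic form over k. If K/k is a finite field extension of odd degree, then the base change of q to K is anisotropic (Springer's theorem). -/
open Polynomial Module

/-- Anisotropy of the quadratic form with coefficient matrix `M`, in coordinates. -/
def MatrixAniso {R : Type*} [CommRing R] {n : ℕ} (M : Matrix (Fin n) (Fin n) R) : Prop :=
  ∀ x : Fin n → R, (∑ i, ∑ j, M i j * x i * x j) = 0 → x = 0

/-- Any nonzero polynomial of odd degree has an irreducible factor of odd degree. -/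
lemma exists_odd_irreducible_factor {F : Type*} [Field F] (N : ℕ) :
    ∀ h : F[X], h.natDegree ≤ N → h ≠ 0 → Odd h.natDegree →
      ∃ π : F[X], Irreducible π ∧ π ∣ h ∧ Odd π.natDegree := by
  induction N with
  | zero =>
    intro h hN _ hodd
    exact absurd hodd (by simp [Nat.le_zero.mp hN])
  | succ N IH =>
    intro h hN h0 hodd
    have hu : ¬ IsUnit h := fun hu => by
      simp [Polynomial.natDegree_eq_zero_of_isUnit hu] at hodd
    obtain ⟨π, hπ, hdvd⟩ := WfDvdMonoid.exists_irreducible_factor hu h0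
    by_cases hπodd : Odd π.natDegree
    · exact ⟨π, hπ, hdvd, hπodd⟩
    · obtain ⟨h₂, rfl⟩ := hdvd
      have h₂0 : h₂ ≠ 0 := fun h' => by simp [h'] at h0
      have hπ0 : π ≠ 0 := hπ.ne_zero
      have hdeg : (π * h₂).natDegree = π.natDegree + h₂.natDegree := natDegree_mul hπ0 h₂0
      have hπpos : 0 < π.natDegree := hπ.natDegree_pos
      rw [Nat.not_odd_iff_even] at hπodd
      rw [hdeg] at hodd hN
      have h₂odd : Odd h₂.natDegree := by
        rcases hπodd with ⟨t, ht⟩; rcases hodd with ⟨s, hs⟩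
        exact ⟨s - t, by omega⟩
      obtain ⟨ρ, h1, h2, h3⟩ := IH h₂ (by omega) h₂0 h₂odd
      exact ⟨ρ, h1, h2.mul_left π, h3⟩

/-- Expansion of a bilinear form on a linear combination. -/
lemma bilin_expand {A : Type*} [CommRing A] {W : Type*} [AddCommGroup W] [Module A W]
    (B : W →ₗ[A] W →ₗ[A] A) {n : ℕ} (u : Fin n → W) (cc : Fin n → A) :
    B (∑ i, cc i • u i) (∑ j, cc j • u j) = ∑ i, ∑ j, B (u i) (u j) * cc i * cc j := by
  have h1 : B (∑ i, cc i • u i) = ∑ i, cc i • B (u i) := by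
    rw [map_sum]
    exact Finset.sum_congr rfl fun i _ => map_smul B _ _
  rw [h1, LinearMap.sum_apply]
  refine Finset.sum_congr rfl fun i _ => ?_
  rw [LinearMap.smul_apply, map_sum, smul_eq_mul, Finset.mul_sum]
  refine Finset.sum_congr rfl fun j _ => ?_
  rw [map_smul, smul_eq_mul]
  ring

universe u

/-- Polynomial form of Springer's theorem, by strong induction on the degree. -/
theorem springer_key (d : ℕ) :
    ∀ (_ : Odd d) (k K : Type u) [Field k] [Field K] [Algebra k K] [FiniteDimensional k K]
      (_ : Module.finrank k K = d) {n : ℕ} (M : Matrix (Fin n) (Fin n) k),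
      MatrixAniso M → MatrixAniso (M.map (algebraMap k K)) := by
  induction d using Nat.strong_induction_on with
  | _ d IH =>
  classical
  intro hd k K _ _ _ _ hrank n M hM x hx
  by_cases hall : ∀ j, x j ∈ Set.range (algebraMap k K)
  · choose y hy using hall
    have hy0 : (∑ i, ∑ j, M i j * y i * y j) = 0 := by
      apply (algebraMap k K).injective
      rw [map_sum, map_zero, ← hx]
      refine Finset.sum_congr rfl fun i _ => ?_
      rw [map_sum]
      exact Finset.sum_congr rfl fun j _ => by simp [Matrix.map_apply, hy]
    have hy' := hM y hy0
    funext j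
    rw [Pi.zero_apply, ← hy j, congrFun hy' j]
    simp
  · push_neg at hall
    obtain ⟨j0, hj0⟩ := hall
    set c := x j0 with hc
    have hc0 : c ≠ 0 := fun h => hj0 ⟨0, by rw [map_zero, ← h]⟩
    have hcint : IsIntegral k c := IsIntegral.of_finite k c
    set L := IntermediateField.adjoin k {c} with hLdef
    haveI : FiniteDimensional k L := IntermediateField.adjoin.finiteDimensional hcint
    haveI : FiniteDimensional L K := FiniteDimensional.right k L K
    set e := Module.finrank k L with he
    set e' := Module.finrank L K with he'
    have hee' : e * e' = d := by rw [he, he', Module.finrank_mul_finrank, hrank]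
    have he'pos : 0 < e' := Module.finrank_pos
    have hepos : 0 < e := Module.finrank_pos
    have hdpos : 0 < d := hd.pos
    have he1 : 1 < e := by
      rcases Nat.lt_or_ge 1 e with h | h
      · exact h
      · exfalso
        have he_eq : Module.finrank k L = 1 := by omega
        have hLbot : L = ⊥ := IntermediateField.finrank_eq_one_iff.mp he_eq
        apply hj0
        have hcL : c ∈ L := IntermediateField.mem_adjoin_simple_self k c
        rw [hLbot] at hcL
        exact (IntermediateField.mem_bot).mp hcL
    by_cases hed : e = d
    · -- simple case : K is generated by c
      have he'1 : e' = 1 := by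
        by_contra hne
        have h2 : 2 ≤ e' := by omega
        have h3 : e * 2 ≤ e * e' := Nat.mul_le_mul le_rfl h2
        rw [hee'] at h3
        omega
      have hbt : (⊥ : Subalgebra L K) = ⊤ :=
        Subalgebra.bot_eq_top_of_finrank_eq_one (he' ▸ he'1)
      have hxL : ∀ j, x j ∈ L := by
        intro j
        have hmem : x j ∈ (⊤ : Subalgebra L K) := Algebra.mem_top
        rw [← hbt] at hmem
        obtain ⟨l, hl⟩ := Algebra.mem_bot.mp hmem
        exact hl ▸ l.2
      have hxadj : ∀ j, ∃ G : Polynomial k, aeval c G = x j := by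
        intro j
        have h1 : x j ∈ L.toSubalgebra := hxL j
        rw [hLdef, IntermediateField.adjoin_simple_toSubalgebra_of_isAlgebraic hcint.isAlgebraic,
          Algebra.adjoin_singleton_eq_range_aeval] at h1
        exact h1
      choose G hG using hxadj
      set f := minpoly k c with hf
      have hfmonic : f.Monic := minpoly.monic hcint
      have hf0 : f ≠ 0 := hfmonic.ne_zero
      have hfdeg : f.natDegree = d := by
        rw [hf, ← IntermediateField.adjoin.finrank hcint, ← hLdef, ← he, hed]
      have hf1 : f ≠ 1 := by
        intro h
        rw [h, natDegree_one] at hfdeg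
        omega
      set g0 : Fin n → Polynomial k := fun j => G j %ₘ f with hg0
      have hg0eval : ∀ j, aeval c (g0 j) = x j := by
        intro j
        have h1 := Polynomial.modByMonic_add_div (G j) f
        have h2 : aeval c (g0 j + f * (G j /ₘ f)) = x j := by rw [h1, hG]
        simp only [map_add, map_mul, hf, minpoly.aeval, zero_mul] at h2
        simpa using h2
      have hg0deg : ∀ j, (g0 j).natDegree < d := fun j =>
        hfdeg ▸ Polynomial.natDegree_modByMonic_lt (G j) hfmonic hf1
      have hg0j0 : g0 j0 ≠ 0 := by
        intro h0'
        have h1 := hg0eval j0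
        rw [h0', map_zero] at h1
        exact hc0 (hc.trans h1.symm)
      have hw0 : Finset.univ.gcd g0 ≠ 0 := by
        intro h
        exact hg0j0 (Finset.gcd_eq_zero_iff.mp h j0 (Finset.mem_univ j0))
      set g : Fin n → Polynomial k := fun j => g0 j / Finset.univ.gcd g0 with hgdef
      have hgcd1 : Finset.univ.gcd g = 1 :=
        Finset.gcd_div_eq_one (f := g0) (Finset.mem_univ j0) hg0j0
      have hwg : ∀ j, Finset.univ.gcd g0 * g j = g0 j := fun j =>
        EuclideanDomain.mul_div_cancel' hw0 (Finset.gcd_dvd (Finset.mem_univ j))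
      have hg_ne : ∃ j, g j ≠ 0 := ⟨j0, fun h => hg0j0 (by rw [← hwg j0, h, mul_zero])⟩
      have hgdeg : ∀ j, (g j).natDegree < d := by
        intro j
        by_cases h : g j = 0
        · simpa [h] using hdpos
        · have h1 := hg0deg j
          rw [← hwg j, natDegree_mul hw0 h] at h1
          omega
      have hwc0 : (aeval c) (Finset.univ.gcd g0) ≠ 0 := by
        intro h
        have hdvd : f ∣ Finset.univ.gcd g0 := minpoly.dvd k c h
        have h1 := Polynomial.natDegree_le_of_dvd hdvd hw0
        have h2 := Polynomial.natDegree_le_of_dvd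
          (Finset.gcd_dvd (Finset.mem_univ j0)) hg0j0
        have h3 := hg0deg j0
        rw [hfdeg] at h1
        omega
      have hx_eq : ∀ j, x j = aeval c (Finset.univ.gcd g0) * aeval c (g j) := fun j => by
        rw [← map_mul, hwg j, hg0eval j]
      have hS' : (∑ i, ∑ j,
          algebraMap k K (M i j) * aeval c (g i) * aeval c (g j)) = 0 := by
        have h2 : (∑ i, ∑ j, (M.map (algebraMap k K)) i j * x i * x j)
            = (aeval c (Finset.univ.gcd g0) * aeval c (Finset.univ.gcd g0)) *
              ∑ i, ∑ j, algebraMap k K (M i j) * aeval c (g i) * aeval c (g j) := by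
          rw [Finset.mul_sum]
          refine Finset.sum_congr rfl fun i _ => ?_
          rw [Finset.mul_sum]
          refine Finset.sum_congr rfl fun j _ => ?_
          rw [Matrix.map_apply, hx_eq i, hx_eq j]
          ring
        rw [h2] at hx
        rcases mul_eq_zero.mp hx with h | h
        · exact absurd (by rcases mul_eq_zero.mp h with h | h <;> exact h) hwc0
        · exact h
      set p : Polynomial k := ∑ i, ∑ j, Polynomial.C (M i j) * g i * g j with hp
      have hpeval : ∀ (K' : Type u) [Field K'] [Algebra k K'] (t : K'),
          aeval t p = ∑ i, ∑ j, algebraMap k K' (M i j) * aeval t (g i) * aeval t (g j) := by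
        intro K' _ _ t
        rw [hp, map_sum]
        refine Finset.sum_congr rfl fun i _ => ?_
        rw [map_sum]
        refine Finset.sum_congr rfl fun j _ => ?_
        rw [map_mul, map_mul, aeval_C]
      have hpc : aeval c p = 0 := by rw [hpeval]; exact hS'
      have hfp : f ∣ p := minpoly.dvd k c hpc
      set m := Finset.univ.sup (fun j => (g j).natDegree) with hm
      have hglem : ∀ j, (g j).natDegree ≤ m := by
        intro j
        rw [hm]
        exact Finset.le_sup (f := fun j => (g j).natDegree) (Finset.mem_univ j)
      have hcoeff : p.coeff (m + m) = ∑ i, ∑ j, M i j * (g i).coeff m * (g j).coeff m := by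
        rw [hp, Polynomial.finset_sum_coeff]
        refine Finset.sum_congr rfl fun i _ => ?_
        rw [Polynomial.finset_sum_coeff]
        refine Finset.sum_congr rfl fun j _ => ?_
        rw [mul_assoc, Polynomial.coeff_C_mul,
          Polynomial.coeff_mul_add_eq_of_natDegree_le (hglem i) (hglem j), mul_assoc]
      have hwitness : ∃ j1, g j1 ≠ 0 ∧ (g j1).natDegree = m := by
        by_cases hm0 : m = 0
        · obtain ⟨j1, hj1⟩ := hg_ne
          exact ⟨j1, hj1, by have := hglem j1; omega⟩
        · obtain ⟨j1, _, hj1⟩ := Finset.exists_mem_eq_sup Finset.univ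
            ⟨j0, Finset.mem_univ j0⟩ (fun j => (g j).natDegree)
          refine ⟨j1, ?_, hj1.symm⟩
          intro h
          rw [h, natDegree_zero] at hj1
          exact hm0 (hm.trans hj1)
      obtain ⟨j1, hj1ne, hj1deg⟩ := hwitness
      have hane : (fun j => (g j).coeff m) ≠ 0 := by
        intro h
        have h1 := congrFun h j1
        simp only [Pi.zero_apply] at h1
        rw [← hj1deg] at h1
        exact hj1ne (Polynomial.leadingCoeff_eq_zero.mp h1)
      have hpcoeff_ne : p.coeff (m + m) ≠ 0 := by
        intro h
        rw [hcoeff] at h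
        exact hane (hM _ h)
      have hp0 : p ≠ 0 := fun h => hpcoeff_ne (by rw [h]; simp)
      have hpdeg_le : p.natDegree ≤ m + m := by
        rw [hp]
        refine Polynomial.natDegree_sum_le_of_forall_le _ _ fun i _ => ?_
        refine Polynomial.natDegree_sum_le_of_forall_le _ _ fun j _ => ?_
        have h1 : (C (M i j) * g i * g j).natDegree ≤ (C (M i j) * g i).natDegree
            + (g j).natDegree := natDegree_mul_le
        have h2 : (C (M i j) * g i).natDegree ≤ (C (M i j)).natDegree
            + (g i).natDegree := natDegree_mul_le
        have h3 := natDegree_C (M i j)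
        have h4 := hglem i
        have h5 := hglem j
        omega
      have hpdeg_ge : m + m ≤ p.natDegree := Polynomial.le_natDegree_of_ne_zero hpcoeff_ne
      have hpdeg : p.natDegree = m + m := le_antisymm hpdeg_le hpdeg_ge
      have hdlem : d ≤ m + m := by
        have h1 := Polynomial.natDegree_le_of_dvd hfp hp0
        rw [hfdeg, hpdeg] at h1
        exact h1
      obtain ⟨h, hph⟩ := hfp
      have hh0 : h ≠ 0 := fun h' => hp0 (by rw [hph, h', mul_zero])
      have hhdeg : h.natDegree = m + m - d := by
        have h1 := Polynomial.natDegree_mul hf0 hh0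
        rw [← hph, hpdeg, hfdeg] at h1
        omega
      have hmlt : m < d := hj1deg ▸ hgdeg j1
      have hhodd : Odd h.natDegree := by
        rw [hhdeg]
        exact Nat.Even.sub_odd hdlem ⟨m, rfl⟩ hd
      have hhlt : h.natDegree < d := by omega
      obtain ⟨π, hπirr, hπh, hπodd⟩ :=
        exists_odd_irreducible_factor h.natDegree h le_rfl hh0 hhodd
      have hπd : π.natDegree < d :=
        lt_of_le_of_lt (Polynomial.natDegree_le_of_dvd hπh hh0) hhlt
      haveI : Fact (Irreducible π) := ⟨hπirr⟩
      have hπ0 : π ≠ 0 := hπirr.ne_zero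
      haveI : FiniteDimensional k (AdjoinRoot π) := (AdjoinRoot.powerBasis hπ0).finite
      have hEr : Module.finrank k (AdjoinRoot π) = π.natDegree := by
        rw [PowerBasis.finrank (AdjoinRoot.powerBasis hπ0), AdjoinRoot.powerBasis_dim]
      have hKE := IH π.natDegree hπd hπodd k (AdjoinRoot π) hEr M hM
      have hy : (∑ i, ∑ j, (M.map (algebraMap k (AdjoinRoot π))) i j *
          aeval (AdjoinRoot.root π) (g i) * aeval (AdjoinRoot.root π) (g j)) = 0 := by
        have h1 : aeval (AdjoinRoot.root π) p = 0 := by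
          rw [hph, map_mul]
          have h2 : aeval (AdjoinRoot.root π) h = 0 := by
            rw [AdjoinRoot.aeval_eq, AdjoinRoot.mk_eq_zero]
            exact hπh
          rw [h2, mul_zero]
        rw [hpeval (AdjoinRoot π) (AdjoinRoot.root π)] at h1
        simpa [Matrix.map_apply] using h1
      have hzero := hKE _ hy
      have hdvd1 : π ∣ Finset.univ.gcd g := by
        refine Finset.dvd_gcd fun j _ => ?_
        have hj := congrFun hzero j
        simp only [Pi.zero_apply] at hj
        rw [← AdjoinRoot.mk_eq_zero, ← AdjoinRoot.aeval_eq]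
        exact hj
      rw [hgcd1] at hdvd1
      exact absurd (isUnit_of_dvd_one hdvd1) hπirr.not_isUnit
    · -- tower case : e < d
      have helt : e < d := lt_of_le_of_ne (Nat.le_of_dvd hdpos ⟨e', hee'.symm⟩) hed
      have hodds : Odd e ∧ Odd e' := Nat.odd_mul.mp (hee' ▸ hd)
      have he'lt : e' < d := by
        have h1 : e' < e * e' := by
          calc e' = 1 * e' := (one_mul e').symm
          _ < e * e' := (Nat.mul_lt_mul_right he'pos).mpr he1
        omega
      have hL1 := IH e helt hodds.1 k L he.symm M hM
      have hL2 := IH e' he'lt hodds.2 L K he'.symm (M.map (algebraMap k L)) hL1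
      have hmap : (M.map (algebraMap k L)).map (algebraMap L K)
          = M.map (algebraMap k K) := by
        ext i j
        simp [Matrix.map_apply, ← IsScalarTower.algebraMap_apply]
      rw [hmap] at hL2
      exact hL2 x hx

/-- **Springer's theorem**: over a field `k` of characteristic `≠ 2`
(expressed by `2` being invertible in `k`), an anisotropic quadratic form
stays anisotropic after base change to a finite field extension of odd degree. -/
theorem springer_odd_degree_anisotropic
    (k K V : Type*) [Field k] [Invertible (2 : k)] [Field K] [Algebra k K]
    [AddCommGroup V] [Module k V] [FiniteDimensional k V]
    (Q : QuadraticForm k V) (hQ : Q.Anisotropic)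
    [FiniteDimensional k K] (hodd : Odd (Module.finrank k K)) :
    (Q.baseChange K).Anisotropic := by
  classical
  letI : Invertible (2 : K) := (Invertible.map (algebraMap k K) 2).copy 2 (map_ofNat _ _).symm
  set n := Module.finrank k V with hn
  set b := Module.finBasis k V with hb
  set M : Matrix (Fin n) (Fin n) k :=
    fun i j => QuadraticMap.associated (R := k) Q (b i) (b j) with hMdef
  -- anisotropy in coordinates over k
  have hMa : MatrixAniso M := by
    intro v hv
    have hQv : Q (∑ i, v i • b i) = 0 := by
      rw [← QuadraticMap.associated_eq_self_apply k Q, bilin_expand]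
      exact hv
    have hv0 := hQ _ hQv
    funext j
    exact (Fintype.linearIndependent_iff.mp b.linearIndependent v hv0) j
  -- universe bridge via the bottom intermediate field
  have hrnk : Module.finrank (⊥ : IntermediateField k K) K = Module.finrank k K :=
    IntermediateField.finrank_bot'
  haveI : FiniteDimensional (⊥ : IntermediateField k K) K :=
    FiniteDimensional.right k _ K
  have hM'a : MatrixAniso (M.map (algebraMap k (⊥ : IntermediateField k K))) := by
    intro a ha
    set ψ := IntermediateField.botEquiv k K with hψ
    have hcomm : ∀ z : k, ψ (algebraMap k (⊥ : IntermediateField k K) z) = z := fun z => by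
      simpa using ψ.commutes z
    have h2 : (∑ i, ∑ j, M i j * ψ (a i) * ψ (a j)) = 0 := by
      have h3 := congrArg ψ ha
      rw [map_zero, map_sum] at h3
      rw [← h3]
      refine Finset.sum_congr rfl fun i _ => ?_
      rw [map_sum]
      refine Finset.sum_congr rfl fun j _ => ?_
      rw [map_mul, map_mul, Matrix.map_apply, hcomm]
    have h3 := hMa _ h2
    funext j
    have h4 := congrFun h3 j
    simp only [Pi.zero_apply] at h4 ⊢
    exact ψ.injective (by rw [h4, map_zero])
  have hMK : MatrixAniso (M.map (algebraMap k K)) := by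
    have h1 := springer_key (Module.finrank k K) hodd
      (⊥ : IntermediateField k K) K hrnk
      (M.map (algebraMap k (⊥ : IntermediateField k K))) hM'a
    have hmm : (M.map (algebraMap k (⊥ : IntermediateField k K))).map
        (algebraMap (⊥ : IntermediateField k K) K) = M.map (algebraMap k K) := by
      ext i j
      simp [Matrix.map_apply, ← IsScalarTower.algebraMap_apply]
    rwa [hmm] at h1
  -- conclude for the base change
  intro w hw
  set bb := b.baseChange K with hbb
  have hrepr : (∑ i, bb.repr w i • bb i) = w := bb.sum_repr w
  have hBij : ∀ i j, (LinearMap.BilinForm.baseChange K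
      (QuadraticMap.associated (R := k) Q)) (bb i) (bb j) = algebraMap k K (M i j) := by
    intro i j
    rw [hbb, Basis.baseChange_apply, Basis.baseChange_apply,
      LinearMap.BilinForm.baseChange_tmul, mul_one, Algebra.smul_def, mul_one]
  have hQw : (∑ i, ∑ j, algebraMap k K (M i j) * bb.repr w i * bb.repr w j) = 0 := by
    have h1 : (Q.baseChange K) w
        = (LinearMap.BilinForm.baseChange K (QuadraticMap.associated (R := k) Q)) w w := by
      rw [← QuadraticForm.associated_baseChange]
      exact (QuadraticMap.associated_eq_self_apply K _ w).symm
    have h2 : (LinearMap.BilinForm.baseChange K (QuadraticMap.associated (R := k) Q)) w w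
        = ∑ i, ∑ j, algebraMap k K (M i j) * bb.repr w i * bb.repr w j := by
      conv_lhs => rw [← hrepr]
      rw [bilin_expand]
      exact Finset.sum_congr rfl fun i _ => Finset.sum_congr rfl fun j _ => by rw [hBij]
    rw [← h2, ← h1]
    exact hw
  have hc0 := hMK _ hQw
  have : bb.repr w = 0 := by
    ext j
    exact congrFun hc0 j
  exact bb.repr.map_eq_zero_iff.mp this
end

section
/- Let k be a field of characteristic ≠ 2 and q an anisotropic quadratic form over k. Then every closed point of the projective quadric X = {q = 0} has even degree over k; equivalently, every finite extension K/k with X(K) ≠ ∅ has even degree. -/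
open TensorProduct Polynomial Module

namespace SpringerAux

variable {n : ℕ}

/-- The quadratic polynomial function attached to a symmetric matrix `M` over `F`,
evaluated in an `F`-algebra via a ring hom `φ`. -/
def qp {F A : Type*} [CommRing F] [CommRing A] (φ : F →+* A)
    (M : Fin n → Fin n → F) (c : Fin n → A) : A :=
  ∑ i, ∑ j, φ (M i j) * c i * c j

/-- Anisotropy of the quadratic function along a ring hom. -/
def Aniso {F A : Type*} [CommRing F] [CommRing A] (φ : F →+* A)
    (M : Fin n → Fin n → F) : Prop :=
  ∀ c : Fin n → A, qp φ M c = 0 → c = 0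

lemma qp_map {F A A' : Type*} [CommRing F] [CommRing A] [CommRing A']
    (ψ : A →+* A') (φ : F →+* A) (M : Fin n → Fin n → F) (c : Fin n → A) :
    ψ (qp φ M c) = qp (ψ.comp φ) M (fun i => ψ (c i)) := by
  simp [qp, map_sum, map_mul]

lemma qp_comp {F F' A : Type*} [CommRing F] [CommRing F'] [CommRing A]
    (ψ : F' →+* A) (φ : F →+* F') (M : Fin n → Fin n → F) (c : Fin n → A) :
    qp (ψ.comp φ) M c = qp ψ (fun i j => φ (M i j)) c := by
  simp [qp]

lemma aniso_equiv {F A A' : Type*} [CommRing F] [CommRing A] [CommRing A']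
    (e : A ≃+* A') (φ : F →+* A) (M : Fin n → Fin n → F)
    (h : Aniso φ M) : Aniso ((e : A →+* A').comp φ) M := by
  intro c hc
  have h0 : qp φ M (fun i => e.symm (c i)) = 0 := by
    have hmap := qp_map (e.symm : A' →+* A) ((e : A →+* A').comp φ) M c
    rw [hc, map_zero, ← RingHom.comp_assoc] at hmap
    rw [show ((e.symm : A' →+* A).comp (e : A →+* A')) = RingHom.id A from
      RingHom.ext fun x => e.symm_apply_apply x, RingHom.id_comp] at hmap
    exact hmap.symm
  have := h _ h0
  funext i
  have hi : e.symm (c i) = 0 := congrFun this i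
  have := congrArg e hi
  simpa using this

variable {F : Type*} [Field F]

lemma coeff_mul_top {m : ℕ} {u v : F[X]} (hu : u.natDegree ≤ m) (hv : v.natDegree ≤ m) :
    (u * v).coeff (2 * m) = u.coeff m * v.coeff m := by
  rw [coeff_mul]
  refine Finset.sum_eq_single (m, m) (fun b hb hne => ?_) (fun h => ?_)
  · rw [Finset.HasAntidiagonal.mem_antidiagonal] at hb
    rcases lt_or_ge m b.1 with h1 | h1
    · rw [coeff_eq_zero_of_natDegree_lt (lt_of_le_of_lt hu h1), zero_mul]
    · have h2 : m < b.2 := by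
        rcases lt_or_ge m b.2 with h2 | h2
        · exact h2
        · exfalso; apply hne
          have : b.1 = m := by omega
          have : b.2 = m := by omega
          exact Prod.ext (by omega) this
      rw [coeff_eq_zero_of_natDegree_lt (lt_of_le_of_lt hv h2), mul_zero]
  · exact absurd (Finset.HasAntidiagonal.mem_antidiagonal.mpr (by omega)) h

/-- Any nonzero polynomial of odd degree over a field has a monic irreducible factor of
odd degree. -/
lemma exists_odd_factor :
    ∀ d : ℕ, ∀ h : F[X], h.natDegree = d → h ≠ 0 → Odd h.natDegree →
      ∃ r : F[X], r.Monic ∧ Irreducible r ∧ Odd r.natDegree ∧ r ∣ h := by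
  intro d
  induction d using Nat.strong_induction_on with
  | _ d IH =>
    intro h hdeg h0 hodd
    have hnu : ¬ IsUnit h := by
      intro hu
      have h0' : h.natDegree = 0 := natDegree_eq_zero_of_isUnit hu
      rw [h0'] at hodd
      simp [Nat.odd_iff] at hodd
    obtain ⟨r, hrm, hri, hrd⟩ := h.exists_monic_irreducible_factor hnu
    by_cases hro : Odd r.natDegree
    · exact ⟨r, hrm, hri, hro, hrd⟩
    · obtain ⟨h2, rfl⟩ := hrd
      have hr0 : r ≠ 0 := hrm.ne_zero
      have h20 : h2 ≠ 0 := by rintro rfl; simp at h0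
      have hrpos : 0 < r.natDegree := hri.natDegree_pos
      have hmul : r.natDegree + h2.natDegree = d := by
        rw [← hdeg, natDegree_mul hr0 h20]
      have h2odd : Odd h2.natDegree := by
        rw [natDegree_mul hr0 h20] at hodd
        rw [Nat.odd_iff] at hodd ⊢
        rw [Nat.not_odd_iff_even, Nat.even_iff] at hro
        omega
      obtain ⟨r', hr'⟩ := IH h2.natDegree (by omega) h2 rfl h20 h2odd
      exact ⟨r', hr'.1, hr'.2.1, hr'.2.2.1, hr'.2.2.2.trans (Dvd.intro_left r rfl)⟩


/-- Coefficient of the quadratic value at twice the max degree. -/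
lemma coeff_qp_top {n m : ℕ} (M : Fin n → Fin n → F) (e : Fin n → F[X])
    (he : ∀ i, (e i).natDegree ≤ m) :
    (qp (C : F →+* F[X]) M e).coeff (2 * m)
      = qp (RingHom.id F) M (fun i => (e i).coeff m) := by
  unfold qp
  rw [finset_sum_coeff]
  refine Finset.sum_congr rfl fun i _ => ?_
  rw [finset_sum_coeff]
  refine Finset.sum_congr rfl fun j _ => ?_
  rw [mul_assoc, coeff_C_mul, coeff_mul_top (he i) (he j), RingHom.id_apply, mul_assoc]

lemma natDegree_qp_le {n m : ℕ} (M : Fin n → Fin n → F) (e : Fin n → F[X])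
    (he : ∀ i, (e i).natDegree ≤ m) :
    (qp (C : F →+* F[X]) M e).natDegree ≤ 2 * m := by
  refine natDegree_sum_le_of_forall_le _ _ fun i _ => ?_
  refine natDegree_sum_le_of_forall_le _ _ fun j _ => ?_
  calc (C (M i j) * e i * e j).natDegree
      ≤ (C (M i j) * e i).natDegree + (e j).natDegree := natDegree_mul_le
    _ ≤ ((C (M i j)).natDegree + (e i).natDegree) + (e j).natDegree := by
        exact Nat.add_le_add_right natDegree_mul_le _
    _ ≤ 2 * m := by rw [natDegree_C]; have := he i; have := he j; omega

/-- Springer's theorem, core case: anisotropy is preserved by passing to the quotient by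
a monic irreducible polynomial of odd degree. -/
theorem springer_core {n : ℕ} (M : Fin n → Fin n → F)
    (hM : Aniso (RingHom.id F) M) :
    ∀ d : ℕ, Odd d → ∀ p : F[X], p.Monic → Irreducible p → p.natDegree = d →
      Aniso ((AdjoinRoot.mk p).comp (C : F →+* F[X])) M := by
  classical
  intro d
  induction d using Nat.strong_induction_on with
  | _ d IH =>
    intro hodd p hpm hpi hpd c hqc
    by_contra hc0
    have hd1 : 1 ≤ d := hpd ▸ hpi.natDegree_pos
    -- lift c to polynomials of degree < d
    have hsurj : ∀ i, ∃ g : F[X], AdjoinRoot.mk p g = c i := fun i =>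
      AdjoinRoot.mk_surjective (c i)
    choose g hg using hsurj
    set f : Fin n → F[X] := fun i => g i %ₘ p with hf_def
    have hmkf : ∀ i, AdjoinRoot.mk p (f i) = c i := by
      intro i
      rw [hf_def]
      simp only
      rw [modByMonic_eq_sub_mul_div _ p, map_sub, map_mul, AdjoinRoot.mk_self,
        zero_mul, sub_zero, hg]
    have hfdeg : ∀ i, (f i).natDegree ≤ d - 1 := by
      intro i
      by_cases h0 : f i = 0
      · rw [h0]; simp
      · have := degree_modByMonic_lt (g i) hpm
        have hlt : (f i).natDegree < p.natDegree :=
          natDegree_lt_natDegree h0 this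
        omega
    have hf0 : f ≠ 0 := by
      intro h
      apply hc0
      funext i
      rw [← hmkf i, congrFun h i]
      simp
    obtain ⟨i₀, hi₀⟩ : ∃ i, f i ≠ 0 := Function.ne_iff.mp hf0
    -- divide by the gcd
    set G : F[X] := Finset.univ.gcd f with hG_def
    have hG0 : G ≠ 0 := by
      rw [hG_def, Ne, Finset.gcd_eq_zero_iff]
      push_neg
      exact ⟨i₀, Finset.mem_univ _, hi₀⟩
    set e : Fin n → F[X] := fun i => f i / G with he_def
    have hfe : ∀ i, f i = G * e i := fun i =>
      (EuclideanDomain.mul_div_cancel' hG0 (Finset.gcd_dvd (Finset.mem_univ i))).symm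
    have hegcd : Finset.univ.gcd e = 1 :=
      Finset.gcd_div_eq_one (Finset.mem_univ i₀) hi₀
    have hGdeg : G.natDegree ≤ d - 1 := by
      have : G ∣ f i₀ := Finset.gcd_dvd (Finset.mem_univ i₀)
      exact le_trans (natDegree_le_of_dvd this hi₀) (hfdeg i₀)
    have hedeg : ∀ i, (e i).natDegree ≤ d - 1 := by
      intro i
      by_cases h0 : f i = 0
      · have : e i = 0 := by
          rw [he_def]; simp only; rw [h0, EuclideanDomain.zero_div]
        rw [this]; simp
      · exact le_trans (natDegree_le_of_dvd ⟨G, (hfe i).trans (mul_comm _ _)⟩ h0) (hfdeg i)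
    have he0 : e ≠ 0 := by
      intro h
      apply hi₀
      rw [hfe i₀, congrFun h i₀]
      simp
    obtain ⟨j₀, hj₀⟩ : ∃ i, e i ≠ 0 := Function.ne_iff.mp he0
    have hn0 : 0 < n := Fin.pos j₀
    haveI : Nonempty (Fin n) := ⟨j₀⟩
    -- max degree
    set m : ℕ := Finset.univ.sup (fun i => (e i).natDegree) with hm_def
    have hem : ∀ i, (e i).natDegree ≤ m := fun i =>
      Finset.le_sup (f := fun i => (e i).natDegree) (Finset.mem_univ i)
    have hmd : m ≤ d - 1 := Finset.sup_le fun i _ => hedeg i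
    -- the top coefficient vector is nonzero
    obtain ⟨jt, hjt0, hjtm⟩ : ∃ j, e j ≠ 0 ∧ (e j).natDegree = m := by
      obtain ⟨i₁, -, hi₁⟩ := Finset.exists_mem_eq_sup Finset.univ
        Finset.univ_nonempty (fun i => (e i).natDegree)
      by_cases h0 : e i₁ = 0
      · refine ⟨j₀, hj₀, ?_⟩
        rw [h0] at hi₁
        simp only [natDegree_zero] at hi₁
        have h1 := hem j₀
        omega
      · exact ⟨i₁, h0, hi₁.symm⟩
    set t : Fin n → F := fun i => (e i).coeff m with ht_def
    have ht0 : t ≠ 0 := by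
      intro h
      apply hjt0
      have : t jt = 0 := by rw [h]; rfl
      rw [ht_def] at this
      simp only at this
      rw [← hjtm] at this
      exact leadingCoeff_eq_zero.mp this
    have hqt : qp (RingHom.id F) M t ≠ 0 := fun h => ht0 (hM t h)
    -- the quadratic value of e
    set Qe : F[X] := qp (C : F →+* F[X]) M e with hQe_def
    have hQe_coeff : Qe.coeff (2 * m) = qp (RingHom.id F) M t :=
      coeff_qp_top M e hem
    have hQe0 : Qe ≠ 0 := fun h => hqt (by rw [← hQe_coeff, h, coeff_zero])
    have hQedeg : Qe.natDegree = 2 * m := by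
      refine le_antisymm (natDegree_qp_le M e hem) ?_
      exact le_natDegree_of_ne_zero (hQe_coeff ▸ hqt)
    -- p divides Qe
    have hpQf : p ∣ qp (C : F →+* F[X]) M f := by
      rw [← AdjoinRoot.mk_eq_zero, qp_map]
      have : (fun i => AdjoinRoot.mk p (f i)) = c := funext hmkf
      rw [this, hqc]
    have hfactor : qp (C : F →+* F[X]) M f = G * G * Qe := by
      rw [hQe_def]
      unfold qp
      rw [Finset.mul_sum]
      refine Finset.sum_congr rfl fun i _ => ?_
      rw [Finset.mul_sum]
      refine Finset.sum_congr rfl fun j _ => ?_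
      rw [hfe i, hfe j]; ring
    have hpprime : Prime p := hpi.prime
    have hpG : ¬ p ∣ G := by
      intro hdvd
      have h1 := natDegree_le_of_dvd hdvd hG0
      rw [hpd] at h1
      omega
    have hpQe : p ∣ Qe := by
      rw [hfactor] at hpQf
      rcases hpprime.dvd_mul.mp hpQf with h | h
      · rcases hpprime.dvd_mul.mp h with h | h <;> exact absurd h hpG
      · exact h
    obtain ⟨h, hh⟩ := hpQe
    have hh0 : h ≠ 0 := by rintro rfl; rw [mul_zero] at hh; exact hQe0 hh
    have hp0 : p ≠ 0 := hpm.ne_zero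
    have hdegsum : d + h.natDegree = 2 * m := by
      rw [← hpd, ← natDegree_mul hp0 hh0, ← hh, hQedeg]
    obtain ⟨s, hs⟩ := hodd
    have hhodd : Odd h.natDegree := ⟨m - s - 1, by omega⟩
    obtain ⟨r, hrm, hri, hro, hrh⟩ := exists_odd_factor h.natDegree h rfl hh0 hhodd
    have hrdeg : r.natDegree ≤ h.natDegree := natDegree_le_of_dvd hrh hh0
    have hrlt : r.natDegree < d := by omega
    -- reduce modulo r and contradict the inductive hypothesis
    have haniso := IH r.natDegree hrlt hro r hrm hri rfl
    have hc'0 : (fun i => AdjoinRoot.mk r (e i)) = 0 := by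
      apply haniso
      rw [← qp_map, ← hQe_def, hh, map_mul, (AdjoinRoot.mk_eq_zero (f := r)).mpr hrh,
        mul_zero]
    have : ∀ i, r ∣ e i := by
      intro i
      rw [← AdjoinRoot.mk_eq_zero]
      exact congrFun hc'0 i
    have : r ∣ (1 : F[X]) := hegcd ▸ Finset.dvd_gcd fun i _ => this i
    exact hri.not_isUnit (isUnit_of_dvd_one this)

open IntermediateField in
/-- Anisotropy is preserved over an odd-degree simple extension. -/
theorem springer_adjoin {F K : Type*} [Field F] [Field K] [Algebra F K]
    {n : ℕ} (M : Fin n → Fin n → F) (hM : Aniso (RingHom.id F) M)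
    (α : K) (hint : IsIntegral F α) (hodd : Odd (minpoly F α).natDegree) :
    Aniso (algebraMap F F⟮α⟯) M := by
  have hirr := minpoly.irreducible hint
  have hcore := springer_core M hM (minpoly F α).natDegree hodd (minpoly F α)
    (minpoly.monic hint) hirr rfl
  have e := IntermediateField.adjoinRootEquivAdjoin F hint
  have h2 := aniso_equiv e.toRingEquiv _ M hcore
  have heq : ((e.toRingEquiv : AdjoinRoot (minpoly F α) →+* F⟮α⟯).comp
      ((AdjoinRoot.mk (minpoly F α)).comp (C : F →+* F[X]))) = algebraMap F F⟮α⟯ := by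
    refine RingHom.ext fun x => ?_
    have h3 : (AdjoinRoot.mk (minpoly F α)) (C x)
        = algebraMap F (AdjoinRoot (minpoly F α)) x := rfl
    simp only [RingHom.comp_apply, h3]
    exact e.commutes x
  rwa [heq] at h2

open IntermediateField in
/-- Anisotropy is preserved over any odd-degree finite extension (single universe). -/
theorem springer_ext : ∀ d : ℕ, Odd d →
    ∀ (F K : Type v) [Field F] [Field K] [Algebra F K] [FiniteDimensional F K],
      Module.finrank F K = d →
      ∀ {n : ℕ} (M : Fin n → Fin n → F), Aniso (RingHom.id F) M →
        Aniso (algebraMap F K) M := by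
  intro d
  induction d using Nat.strong_induction_on with
  | _ d IH =>
    intro hodd F K _ _ _ _ hrank n M hM c hqc
    by_cases hall : ∀ i, ∃ x : F, algebraMap F K x = c i
    · choose x hx using hall
      have h0 : qp (RingHom.id F) M x = 0 := by
        apply (algebraMap F K).injective
        have hm := qp_map (algebraMap F K) (RingHom.id F) M x
        rw [RingHom.comp_id] at hm
        rw [hm, map_zero]
        have : (fun i => (algebraMap F K) (x i)) = c := funext hx
        rw [this, hqc]
      funext i
      rw [← hx i, congrFun (hM x h0) i]
      simp
    · push_neg at hall
      obtain ⟨i₀, hi₀⟩ := hall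
      set α := c i₀ with hα
      have hint : IsIntegral F α := IsIntegral.of_finite F α
      haveI : FiniteDimensional (↥F⟮α⟯) K := FiniteDimensional.right F (↥F⟮α⟯) K
      have hmul : Module.finrank F ↥F⟮α⟯ * Module.finrank (↥F⟮α⟯) K = d := by
        rw [Module.finrank_mul_finrank, hrank]
      have h1 : Module.finrank F ↥F⟮α⟯ ≠ 1 := by
        intro h1
        have hbot : F⟮α⟯ = ⊥ := IntermediateField.finrank_eq_one_iff.mp h1
        have hmem : α ∈ F⟮α⟯ := IntermediateField.mem_adjoin_simple_self F α
        rw [hbot, IntermediateField.mem_bot] at hmem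
        obtain ⟨y, hy⟩ := hmem
        exact hi₀ y hy
      have hoddmul : Odd (Module.finrank F ↥F⟮α⟯ * Module.finrank (↥F⟮α⟯) K) := by
        rw [hmul]; exact hodd
      have hodd1 : Odd (Module.finrank F ↥F⟮α⟯) := (Nat.odd_mul.mp hoddmul).1
      have hodd2 : Odd (Module.finrank (↥F⟮α⟯) K) := (Nat.odd_mul.mp hoddmul).2
      have hminodd : Odd (minpoly F α).natDegree := by
        rw [← IntermediateField.adjoin.finrank hint]; exact hodd1
      have hM' := springer_adjoin M hM α hint hminodd
      set M' : Fin n → Fin n → ↥F⟮α⟯ := fun i j => algebraMap F ↥F⟮α⟯ (M i j) with hM'def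
      have hM'' : Aniso (RingHom.id ↥F⟮α⟯) M' := by
        intro c' hc'
        apply hM'
        rw [← RingHom.id_comp (algebraMap F ↥F⟮α⟯), qp_comp]
        exact hc'
      have hd2lt : Module.finrank (↥F⟮α⟯) K < d := by
        have h2 : 0 < Module.finrank F ↥F⟮α⟯ := Module.finrank_pos
        have hpos : 0 < Module.finrank (↥F⟮α⟯) K := Module.finrank_pos
        have h2' : 2 ≤ Module.finrank F ↥F⟮α⟯ := by omega
        nlinarith [hmul]
      have hext := IH (Module.finrank (↥F⟮α⟯) K) hd2lt hodd2 (↥F⟮α⟯) K rfl M' hM''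
      apply hext
      rw [← qp_comp, ← IsScalarTower.algebraMap_eq F (↥F⟮α⟯) K]
      exact hqc

section Bridge

variable {k : Type*} {V : Type*} [Field k] [Invertible (2 : k)]
  [AddCommGroup V] [Module k V] [FiniteDimensional k V]

/-- Over the base field, `qp` of the associated-bilinear-form matrix computes `Q`. -/
lemma qp_eq_base (Q : QuadraticForm k V) {m : ℕ} (b : Basis (Fin m) k V)
    (c : Fin m → k) :
    qp (RingHom.id k) (fun i j => QuadraticMap.associated (R := k) Q (b i) (b j)) c
      = Q (∑ i, c i • b i) := by
  have hB : ∀ v, QuadraticMap.associated (R := k) Q v v = Q v := fun v => by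
    conv_rhs => rw [← QuadraticMap.toQuadraticMap_associated k Q]
    rw [LinearMap.BilinMap.toQuadraticMap_apply]
  rw [← hB]
  have e1 : (QuadraticMap.associated (R := k) Q) (∑ i, c i • b i)
      = ∑ i, c i • (QuadraticMap.associated (R := k) Q) (b i) := by
    rw [map_sum]
    exact Finset.sum_congr rfl fun i _ => map_smul _ _ _
  rw [e1, LinearMap.sum_apply]
  unfold qp
  refine Finset.sum_congr rfl fun i _ => ?_
  rw [LinearMap.smul_apply, map_sum, Finset.smul_sum]
  refine Finset.sum_congr rfl fun j _ => ?_
  rw [map_smul, RingHom.id_apply]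
  simp only [smul_eq_mul]
  ring

/-- Base-changed quadratic form in coordinates. -/
lemma qp_eq_baseChange (Q : QuadraticForm k V) {m : ℕ} (b : Basis (Fin m) k V)
    (K : Type*) [Field K] [Algebra k K] (c : Fin m → K) :
    Q.baseChange K (∑ i, c i ⊗ₜ[k] b i)
      = qp (algebraMap k K) (fun i j => QuadraticMap.associated (R := k) Q (b i) (b j)) c := by
  letI : Invertible (2 : K) := (Invertible.map (algebraMap k K) 2).copy 2 (map_ofNat _ _).symm
  have hB : ∀ x : K ⊗[k] V,
      QuadraticMap.associated (R := K) (Q.baseChange K) x x = Q.baseChange K x := fun x => by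
    conv_rhs => rw [← QuadraticMap.toQuadraticMap_associated K (Q.baseChange K)]
    rw [LinearMap.BilinMap.toQuadraticMap_apply]
  rw [← hB, QuadraticForm.associated_baseChange]
  have e1 : (LinearMap.BilinForm.baseChange K (QuadraticMap.associated (R := k) Q))
        (∑ i, c i ⊗ₜ[k] b i)
      = ∑ i, (LinearMap.BilinForm.baseChange K (QuadraticMap.associated (R := k) Q))
        (c i ⊗ₜ[k] b i) := map_sum _ _ _
  rw [e1, LinearMap.sum_apply]
  unfold qp
  refine Finset.sum_congr rfl fun i _ => ?_
  rw [map_sum]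
  refine Finset.sum_congr rfl fun j _ => ?_
  rw [LinearMap.BilinForm.baseChange_tmul, Algebra.smul_def, mul_assoc]

end Bridge

end SpringerAux

open SpringerAux in
open IntermediateField in
/-- Geometric form of Springer's theorem: for an anisotropic quadratic form
`Q` over a field `k` of characteristic `≠ 2`, every finite extension `K/k`
over which the projective quadric `{Q = 0}` acquires a point (i.e. `Q ⊗ K` is
isotropic) has even degree; hence every closed point of the quadric has even
degree. -/
theorem anisotropic_quadric_closed_points_even_degree
    (k V : Type*) [Field k] [Invertible (2 : k)]
    [AddCommGroup V] [Module k V] [FiniteDimensional k V]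
    (Q : QuadraticForm k V) (hQ : Q.Anisotropic) :
    ∀ (K : Type*) [Field K] [Algebra k K] [FiniteDimensional k K],
      (∃ w : K ⊗[k] V, w ≠ 0 ∧ Q.baseChange K w = 0) →
      2 ∣ Module.finrank k K := by
  intro K _ _ _ hex
  obtain ⟨w, hw0, hwQ⟩ := hex
  by_contra h2
  have hodd : Odd (Module.finrank k K) := Nat.odd_iff.mpr (Nat.two_dvd_ne_zero.mp h2)
  set b : Basis (Fin (Module.finrank k V)) k V := Module.finBasis k V with hb
  set M : Fin (Module.finrank k V) → Fin (Module.finrank k V) → k :=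
    fun i j => QuadraticMap.associated (R := k) Q (b i) (b j) with hM
  -- anisotropy over `k` in coordinates
  have hMk : Aniso (RingHom.id k) M := by
    intro c₀ h₀
    rw [hM, qp_eq_base Q b c₀] at h₀
    have hzero := hQ _ h₀
    funext i
    exact Fintype.linearIndependent_iff.mp b.linearIndependent c₀ hzero i
  -- coordinates of `w`
  set bK := Basis.baseChange K b with hbK
  set c : Fin (Module.finrank k V) → K := fun i => bK.repr w i with hc
  have hw : w = ∑ i, c i ⊗ₜ[k] b i := by
    conv_lhs => rw [← bK.sum_repr w]
    refine Finset.sum_congr rfl fun i _ => ?_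
    rw [hbK, Basis.baseChange_apply, TensorProduct.smul_tmul', smul_eq_mul, mul_one]
  have hc0 : c ≠ 0 := by
    intro h
    apply hw0
    rw [hw, h]
    simp
  have hqc : qp (algebraMap k K) M c = 0 := by
    rw [hM, ← qp_eq_baseChange Q b K c, ← hw]
    exact hwQ
  -- the first step of the induction, crossing universes
  by_cases hall : ∀ i, ∃ x : k, algebraMap k K x = c i
  · choose x hx using hall
    have h0 : qp (RingHom.id k) M x = 0 := by
      apply (algebraMap k K).injective
      have hm := qp_map (algebraMap k K) (RingHom.id k) M x
      rw [RingHom.comp_id] at hm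
      rw [hm, map_zero]
      have : (fun i => (algebraMap k K) (x i)) = c := funext hx
      rw [this, hqc]
    apply hc0
    funext i
    rw [← hx i, congrFun (hMk x h0) i]
    simp
  · push_neg at hall
    obtain ⟨i₀, hi₀⟩ := hall
    set α := c i₀ with hα
    have hint : IsIntegral k α := IsIntegral.of_finite k α
    haveI : FiniteDimensional (↥k⟮α⟯) K := FiniteDimensional.right k (↥k⟮α⟯) K
    have hmul : Module.finrank k ↥k⟮α⟯ * Module.finrank (↥k⟮α⟯) K
        = Module.finrank k K := Module.finrank_mul_finrank _ _ _
    have hoddmul : Odd (Module.finrank k ↥k⟮α⟯ * Module.finrank (↥k⟮α⟯) K) := by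
      rw [hmul]; exact hodd
    have hodd1 : Odd (Module.finrank k ↥k⟮α⟯) := (Nat.odd_mul.mp hoddmul).1
    have hodd2 : Odd (Module.finrank (↥k⟮α⟯) K) := (Nat.odd_mul.mp hoddmul).2
    have hminodd : Odd (minpoly k α).natDegree := by
      rw [← IntermediateField.adjoin.finrank hint]; exact hodd1
    have hM' := springer_adjoin M hMk α hint hminodd
    set M' : Fin (Module.finrank k V) → Fin (Module.finrank k V) → ↥k⟮α⟯ :=
      fun i j => algebraMap k ↥k⟮α⟯ (M i j) with hM'def
    have hM'' : Aniso (RingHom.id ↥k⟮α⟯) M' := by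
      intro c' hc'
      apply hM'
      rw [← RingHom.id_comp (algebraMap k ↥k⟮α⟯), qp_comp]
      exact hc'
    have hext := springer_ext (Module.finrank (↥k⟮α⟯) K) hodd2 (↥k⟮α⟯) K rfl M' hM''
    apply hc0
    apply hext
    rw [← qp_comp, ← IsScalarTower.algebraMap_eq k (↥k⟮α⟯) K]
    exact hqc
end

section
/- Let k be a field of characteristic ≠ 2 and a₁, …, aₙ ∈ k nonzero such that the form Σ aᵢ xᵢ² is anisotropic over k. For polynomials f₁, …, fₙ ∈ k[t] not all zero, the degree of Σ aᵢ fᵢ(t)² equals 2·max_i deg(fᵢ). -/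
open Polynomial

lemma coeff_mul_of_natDegree_le' {k : Type*} [CommRing k] (p q : k[X]) (d : ℕ)
    (hp : p.natDegree ≤ d) (hq : q.natDegree ≤ d) :
    (p * q).coeff (d + d) = p.coeff d * q.coeff d := by
  rcases eq_or_lt_of_le hp with hp' | hp'
  · rcases eq_or_lt_of_le hq with hq' | hq'
    · have h : d + d = p.natDegree + q.natDegree := by omega
      rw [h, coeff_mul_degree_add_degree, leadingCoeff, leadingCoeff, hp', hq']
    · rw [coeff_eq_zero_of_natDegree_lt hq', mul_zero,
        coeff_eq_zero_of_natDegree_lt]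
      calc (p * q).natDegree ≤ p.natDegree + q.natDegree := natDegree_mul_le
        _ < d + d := by omega
  · rw [coeff_eq_zero_of_natDegree_lt hp', zero_mul,
      coeff_eq_zero_of_natDegree_lt]
    calc (p * q).natDegree ≤ p.natDegree + q.natDegree := natDegree_mul_le
      _ < d + d := by omega

/-- Key lemma in Springer's theorem: if the diagonal form `Σ aᵢ xᵢ²` with all
`aᵢ ≠ 0` is anisotropic over `k` (char `≠ 2`), then for polynomials
`f₁,…,fₙ ∈ k[t]`, not all zero, the degree of `Σ aᵢ fᵢ(t)²` is exactly
`2·maxᵢ deg fᵢ` (the top coefficients cannot cancel). -/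
theorem anisotropic_sum_squares_natDegree
    (k : Type*) [Field k] (hchar : ringChar k ≠ 2)
    (n : ℕ) (a : Fin n → k) (ha : ∀ i, a i ≠ 0)
    (haniso : ∀ x : Fin n → k, (∑ i, a i * x i ^ 2) = 0 → x = 0)
    (f : Fin n → k[X]) (hf : f ≠ 0) :
    (∑ i, C (a i) * f i ^ 2).natDegree
      = 2 * Finset.univ.sup fun i => (f i).natDegree := by
  classical
  set d := Finset.univ.sup fun i => (f i).natDegree with hd
  obtain ⟨j, hj⟩ : ∃ i, f i ≠ 0 := by
    by_contra h; push_neg at h; exact hf (funext h)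
  have hne : (Finset.univ : Finset (Fin n)).Nonempty := ⟨j, Finset.mem_univ j⟩
  obtain ⟨i0, -, hi0⟩ := Finset.exists_mem_eq_sup Finset.univ hne
    fun i => (f i).natDegree
  have hle : ∀ l, (f l).natDegree ≤ d := fun l => le_of_le_of_eq (Finset.le_sup (f := fun i => (f i).natDegree) (Finset.mem_univ l)) hd.symm
  have key : ∃ i, f i ≠ 0 ∧ (f i).natDegree = d := by
    by_cases h : f i0 = 0
    · refine ⟨j, hj, ?_⟩
      have hd0 : d = 0 := by rw [hd, hi0, h, natDegree_zero]
      have := hle j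
      omega
    · exact ⟨i0, h, hi0.symm⟩
  obtain ⟨i, hine, hideg⟩ := key
  set x : Fin n → k := fun l => (f l).coeff d with hxdef
  have hx : x ≠ 0 := by
    intro h
    have hc : (f i).coeff d = 0 := congrFun h i
    rw [← hideg] at hc
    exact hine (leadingCoeff_eq_zero.mp hc)
  have hcoeff : (∑ l, C (a l) * f l ^ 2).coeff (2 * d) = ∑ l, a l * x l ^ 2 := by
    rw [finset_sum_coeff]
    refine Finset.sum_congr rfl fun l _ => ?_
    have h2d : 2 * d = d + d := by omega
    rw [coeff_C_mul, h2d, sq (f l), coeff_mul_of_natDegree_le' _ _ d (hle l) (hle l),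
      ← sq]
  have hne0 : (∑ l, a l * x l ^ 2) ≠ 0 := fun h => hx (haniso x h)
  have hub : (∑ l, C (a l) * f l ^ 2).natDegree ≤ 2 * d := by
    refine natDegree_sum_le_of_forall_le _ _ fun l _ => ?_
    calc (C (a l) * f l ^ 2).natDegree ≤ (C (a l)).natDegree + (f l ^ 2).natDegree :=
          natDegree_mul_le
      _ ≤ 0 + 2 * (f l).natDegree := by
          gcongr
          · exact le_of_eq (natDegree_C _)
          · exact natDegree_pow_le
      _ ≤ 2 * d := by have := hle l; omega
  have hlb : 2 * d ≤ (∑ l, C (a l) * f l ^ 2).natDegree :=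
    le_natDegree_of_ne_zero (hcoeff ▸ hne0)
  omega
end
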